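/- If μ is a nonzero constant, λ : ℝ³ → ℝ is C¹, and u : ℝ³ → ℝ³ is a C³ solution of the Lamé system μ Δu + (μ + λ) ∇(div u) + (div u) ∇λ = 0 on an open set Ω, then each component of curl u is harmonic on Ω, i.e., Δ(curl u) = 0 on Ω. -/

import Mathlib

open MeasureTheory Metric Set

noncomputable def pd (i : Fin 3) (f : (Fin 3 → ℝ) → ℝ) (x : Fin 3 → ℝ) : ℝ :=
  fderiv ℝ f x (Pi.single i 1)

noncomputable def grad (f : (Fin 3 → ℝ) → ℝ) (x : Fin 3 → ℝ) : Fin 3 → ℝ :=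
  fun i => pd i f x

noncomputable def vdiv (u : (Fin 3 → ℝ) → Fin 3 → ℝ) (x : Fin 3 → ℝ) : ℝ :=
  ∑ i, pd i (fun y => u y i) x

noncomputable def curl (u : (Fin 3 → ℝ) → Fin 3 → ℝ) (x : Fin 3 → ℝ) : Fin 3 → ℝ :=
  ![pd 1 (fun y => u y 2) x - pd 2 (fun y => u y 1) x,
    pd 2 (fun y => u y 0) x - pd 0 (fun y => u y 2) x,
    pd 0 (fun y => u y 1) x - pd 1 (fun y => u y 0) x]

noncomputable def lap (f : (Fin 3 → ℝ) → ℝ) (x : Fin 3 → ℝ) : ℝ :=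
  ∑ i, pd i (pd i f) x

noncomputable def lapV (u : (Fin 3 → ℝ) → Fin 3 → ℝ) (x : Fin 3 → ℝ) : Fin 3 → ℝ :=
  fun i => lap (fun y => u y i) x

/-!
By the product rule, `(μ + λ) ∇(div u) + (div u) ∇λ = ∇((μ + λ) div u)`, so the Lamé system
says `μ Δu = -∇((μ + λ) div u)`. The potential `(μ + λ) div u` is only `C¹`, but its gradient
`-μ Δu` is `C¹`, which is enough for the symmetry of second derivatives; hence `curl (μ Δu) = 0`.
Since `curl` commutes with `Δ` on `C³` fields and `μ ≠ 0`, this gives `Δ (curl u) = 0`.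
-/

open Filter Topology

section PartialDerivatives

variable {f g : (Fin 3 → ℝ) → ℝ} {s : Set (Fin 3 → ℝ)} {x : Fin 3 → ℝ}

lemma Filter.EventuallyEq.pd_eq (h : f =ᶠ[𝓝 x] g) (i : Fin 3) : pd i f x = pd i g x := by
  rw [pd, pd, h.fderiv_eq]

lemma pd_sub (hf : DifferentiableAt ℝ f x) (hg : DifferentiableAt ℝ g x) (i : Fin 3) :
    pd i (fun y => f y - g y) x = pd i f x - pd i g x := by
  simp only [pd, fderiv_fun_sub hf hg, sub_apply]

lemma pd_const_mul (hf : DifferentiableAt ℝ f x) (c : ℝ) (i : Fin 3) :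
    pd i (fun y => c * f y) x = c * pd i f x := by
  simp only [pd, fderiv_const_mul hf c, smul_apply, smul_eq_mul]

lemma pd_mul (hf : DifferentiableAt ℝ f x) (hg : DifferentiableAt ℝ g x) (i : Fin 3) :
    pd i (fun y => f y * g y) x = f x * pd i g x + g x * pd i f x := by
  simp only [pd, fderiv_fun_mul hf hg, add_apply, smul_apply, smul_eq_mul]

lemma pd_const_add (c : ℝ) (i : Fin 3) : pd i (fun y => c + f y) x = pd i f x := by
  rw [pd, pd, fderiv_const_add]

lemma pd_sum {F : Fin 3 → (Fin 3 → ℝ) → ℝ} (hF : ∀ k, DifferentiableAt ℝ (F k) x)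
    (i : Fin 3) : pd i (fun y => ∑ k, F k y) x = ∑ k, pd i (F k) x := by
  simp only [pd, fderiv_fun_sum fun k _ => hF k, sum_apply]

lemma fderiv_eq_sum_pd (f : (Fin 3 → ℝ) → ℝ) :
    fderiv ℝ f = fun y => ∑ j, pd j f y • ContinuousLinearMap.proj j := by
  funext y
  refine ContinuousLinearMap.ext fun v => ?_
  conv_lhs => rw [← Finset.univ_sum_single v]
  simp only [map_sum, FunLike.coe_sum, Finset.sum_apply, FunLike.coe_smul, Pi.smul_apply,
    ContinuousLinearMap.proj_apply, smul_eq_mul, pd]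
  refine Finset.sum_congr rfl fun j _ => ?_
  have hsingle : (Pi.single j (v j) : Fin 3 → ℝ) = v j • Pi.single j 1 := by
    rw [← Pi.single_smul', smul_eq_mul, mul_one]
  rw [hsingle, map_smul, smul_eq_mul, mul_comm]

lemma pd_comm (hf : ∀ᶠ y in 𝓝 x, DifferentiableAt ℝ f y)
    (hpd : ∀ j, DifferentiableAt ℝ (pd j f) x) (i j : Fin 3) :
    pd i (pd j f) x = pd j (pd i f) x := by
  have hf' : DifferentiableAt ℝ (fderiv ℝ f) x := by
    rw [fderiv_eq_sum_pd]
    exact DifferentiableAt.fun_sum fun j _ => (hpd j).smul_const _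
  have hsecond : ∀ a b : Fin 3,
      pd a (pd b f) x = fderiv ℝ (fderiv ℝ f) x (Pi.single a 1) (Pi.single b 1) := by
    intro a b
    change fderiv ℝ (fun y => fderiv ℝ f y (Pi.single b 1)) x (Pi.single a 1) = _
    simp [fderiv_clm_apply hf' (differentiableAt_const _)]
  rw [hsecond, hsecond, second_derivative_symmetric_of_eventually
    (hf.mono fun y hy => hy.hasFDerivAt) hf'.hasFDerivAt]

variable {m n : WithTop ℕ∞}

lemma ContDiffOn.pd (hf : ContDiffOn ℝ n f s) (hs : IsOpen s) (hmn : m + 1 ≤ n) (i : Fin 3) :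
    ContDiffOn ℝ m (pd i f) s :=
  (hf.fderiv_of_isOpen hs hmn).clm_apply contDiffOn_const

lemma ContDiffOn.lap (hf : ContDiffOn ℝ n f s) (hs : IsOpen s) (hmn : m + 2 ≤ n) :
    ContDiffOn ℝ m (lap f) s :=
  ContDiffOn.sum fun k _ =>
    (hf.pd hs (m := m + 1) (by rwa [add_assoc, one_add_one_eq_two]) k).pd hs le_rfl k

lemma ContDiffOn.vdiv {u : (Fin 3 → ℝ) → Fin 3 → ℝ} (hu : ContDiffOn ℝ n u s) (hs : IsOpen s)
    (hmn : m + 1 ≤ n) : ContDiffOn ℝ m (vdiv u) s :=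
  ContDiffOn.sum fun k _ => (contDiffOn_pi.1 hu k).pd hs hmn k

lemma pd_comm_of_contDiffOn (hf : ContDiffOn ℝ 2 f s) (hs : IsOpen s) (hx : x ∈ s)
    (i j : Fin 3) : pd i (pd j f) x = pd j (pd i f) x :=
  pd_comm ((hf.differentiableOn two_ne_zero).eventually_differentiableAt (hs.mem_nhds hx))
    (fun k => ((hf.pd hs (m := 1) (by norm_num) k).differentiableOn one_ne_zero).differentiableAt
      (hs.mem_nhds hx)) i j

lemma lap_sub (hf : ContDiffOn ℝ 2 f s) (hg : ContDiffOn ℝ 2 g s) (hs : IsOpen s)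
    (hx : x ∈ s) : lap (fun y => f y - g y) x = lap f x - lap g x := by
  simp only [lap, ← Finset.sum_sub_distrib]
  refine Finset.sum_congr rfl fun k _ => ?_
  have hpd_sub : pd k (fun y => f y - g y) =ᶠ[𝓝 x] fun y => pd k f y - pd k g y :=
    (hs.eventually_mem hx).mono fun y hy =>
      pd_sub ((hf.differentiableOn two_ne_zero).differentiableAt (hs.mem_nhds hy))
        ((hg.differentiableOn two_ne_zero).differentiableAt (hs.mem_nhds hy)) k
  rw [hpd_sub.pd_eq]
  exact pd_sub
    (((hf.pd hs (m := 1) (by norm_num) k).differentiableOn one_ne_zero).differentiableAt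
      (hs.mem_nhds hx))
    (((hg.pd hs (m := 1) (by norm_num) k).differentiableOn one_ne_zero).differentiableAt
      (hs.mem_nhds hx)) k

lemma lap_pd_comm (hf : ContDiffOn ℝ 3 f s) (hs : IsOpen s) (hx : x ∈ s) (i : Fin 3) :
    lap (pd i f) x = pd i (lap f) x := by
  have hpd2 : ∀ k, ContDiffOn ℝ 2 (pd k f) s := fun k => hf.pd hs (by norm_num) k
  have hcomm : ∀ k, pd k (pd k (pd i f)) x = pd i (pd k (pd k f)) x := fun k => by
    have hinner : pd k (pd i f) =ᶠ[𝓝 x] pd i (pd k f) := (hs.eventually_mem hx).mono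
      fun y hy => pd_comm_of_contDiffOn (hf.of_le (by norm_num)) hs hy k i
    rw [hinner.pd_eq, pd_comm_of_contDiffOn (hpd2 k) hs hx k i]
  unfold lap
  rw [Finset.sum_congr rfl fun k _ => hcomm k, pd_sum fun k =>
    (((hpd2 k).pd hs (m := 1) (by norm_num) k).differentiableOn one_ne_zero).differentiableAt
      (hs.mem_nhds hx)]

end PartialDerivatives

lemma pd_add_mul_vdiv_of_lame {μ : ℝ} {lam : (Fin 3 → ℝ) → ℝ}
    {u : (Fin 3 → ℝ) → Fin 3 → ℝ} {x : Fin 3 → ℝ} {j : Fin 3}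
    (hlam : DifferentiableAt ℝ lam x) (hdiv : DifferentiableAt ℝ (vdiv u) x)
    (hsol : μ * lapV u x j + (μ + lam x) * grad (vdiv u) x j + vdiv u x * grad lam x j = 0) :
    pd j (fun y => (μ + lam y) * vdiv u y) x = -μ * lapV u x j := by
  rw [pd_mul (hlam.const_add μ) hdiv, pd_const_add]
  simp only [grad] at hsol
  linarith

lemma pd_lap_comm_of_lame {Ω : Set (Fin 3 → ℝ)} (hΩ : IsOpen Ω) {μ : ℝ} (hμ : μ ≠ 0)
    {lam : (Fin 3 → ℝ) → ℝ} (hlam : ContDiffOn ℝ 1 lam Ω)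
    {u : (Fin 3 → ℝ) → Fin 3 → ℝ} (hu : ContDiffOn ℝ 3 u Ω)
    (hsol : ∀ x ∈ Ω, ∀ i,
      μ * lapV u x i + (μ + lam x) * grad (vdiv u) x i + vdiv u x * grad lam x i = 0)
    {x : Fin 3 → ℝ} (hx : x ∈ Ω) (i j : Fin 3) :
    pd i (lap fun y => u y j) x = pd j (lap fun y => u y i) x := by
  have hdiv : DifferentiableOn ℝ (vdiv u) Ω :=
    (hu.vdiv hΩ (m := 1) (by norm_num)).differentiableOn one_ne_zero
  have hlam' : DifferentiableOn ℝ lam Ω := hlam.differentiableOn one_ne_zero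
  have hlap : ∀ k, DifferentiableAt ℝ (lap fun y => u y k) x := fun k =>
    (((contDiffOn_pi.1 hu k).lap hΩ (m := 1) (by norm_num)).differentiableOn
      one_ne_zero).differentiableAt (hΩ.mem_nhds hx)
  have hpot : ∀ k, pd k (fun y => (μ + lam y) * vdiv u y) =ᶠ[𝓝 x]
      fun y => -μ * lap (fun z => u z k) y := fun k =>
    (hΩ.eventually_mem hx).mono fun y hy => pd_add_mul_vdiv_of_lame
      (hlam'.differentiableAt (hΩ.mem_nhds hy)) (hdiv.differentiableAt (hΩ.mem_nhds hy))
      (hsol y hy k)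
  have hsymm := pd_comm (f := fun y => (μ + lam y) * vdiv u y)
    (((differentiableOn_const μ).add hlam').mul hdiv |>.eventually_differentiableAt
      (hΩ.mem_nhds hx))
    (fun k => (hpot k).differentiableAt_iff.2 ((hlap k).const_mul _)) i j
  rw [(hpot j).pd_eq, (hpot i).pd_eq, pd_const_mul (hlap j), pd_const_mul (hlap i)] at hsymm
  exact mul_left_cancel₀ (neg_ne_zero.2 hμ) hsymm

theorem curl_harmonic_of_lame_solution
    (Ω : Set (Fin 3 → ℝ)) (hΩ : IsOpen Ω)
    (μ : ℝ) (hμ : μ ≠ 0)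
    (lam : (Fin 3 → ℝ) → ℝ) (hlam : ContDiffOn ℝ 1 lam Ω)
    (u : (Fin 3 → ℝ) → Fin 3 → ℝ) (hu : ContDiffOn ℝ 3 u Ω)
    (hsol : ∀ x ∈ Ω, ∀ i,
      μ * lapV u x i + (μ + lam x) * grad (vdiv u) x i + vdiv u x * grad lam x i = 0) :
    ∀ x ∈ Ω, ∀ i, lap (fun y => curl u y i) x = 0 := by
  intro x hx i
  have hU : ∀ k, ContDiffOn ℝ 3 (fun y => u y k) Ω := contDiffOn_pi.1 hu
  have hcurl : ∀ a b : Fin 3,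
      lap (fun y => pd a (fun z => u z b) y - pd b (fun z => u z a) y) x = 0 := fun a b => by
    rw [lap_sub ((hU b).pd hΩ (by norm_num) a) ((hU a).pd hΩ (by norm_num) b) hΩ hx,
      lap_pd_comm (hU b) hΩ hx, lap_pd_comm (hU a) hΩ hx,
      pd_lap_comm_of_lame hΩ hμ hlam hu hsol hx, sub_self]
  fin_cases i
  exacts [hcurl 1 2, hcurl 2 0, hcurl 0 1]
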